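/- arXiv:1003.0691 — 2 statements merged into one kernel-verified Lean document; each statement's English description precedes it below -/
import Mathlib

section
/- The pseudo-likelihood collection of m-pairs 𝒮 = {({1},{1}^c), ({2},{2}^c), ..., ({m},{m}^c)}, i.e., all singletons conditioned on their complements, ensures identifiability for any family of strictly positive distributions on a finite product space: if two strictly positive distributions p and q on ∏_{i=1}^m S_i satisfy p(X_i|X_{-i}) = q(X_i|X_{-i}) for all i, then p = q. -/
open Finset

/-!
Since `p(x_i | x_{-i}) = p(x) / Z_p(x_{-i})` with `Z_p(x_{-i}) = ∑_a p(x_{-i}, a)`, equality of the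
conditionals says `p(x) / q(x) = Z_p(x_{-i}) / Z_q(x_{-i})`, which does not depend on `x_i`. So the
ratio `p / q` is invariant under changing any single coordinate, hence constant on the product
space, and the normalisations `∑ p = ∑ q = 1` force the constant to be `1`.
-/

section UpdateInvariant

variable {ι : Type*} [DecidableEq ι] {S : ι → Type*}

theorem apply_eq_of_forall_apply_update_eq [Fintype ι] {β : Type*} {f : (∀ i, S i) → β}
    (hf : ∀ x i a, f (Function.update x i a) = f x) (x y : ∀ i, S i) : f x = f y := by
  suffices h : ∀ s : Finset ι, ∀ x : ∀ i, S i, (∀ j ∉ s, x j = y j) → f x = f y from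
    h univ x fun j hj => absurd (mem_univ j) hj
  intro s
  induction s using Finset.induction_on with
  | empty => exact fun x hxy => congrArg f (funext fun j => hxy j (notMem_empty j))
  | insert i s _ ih =>
    intro x hxy
    have hagree : ∀ j ∉ s, Function.update x i (y i) j = y j := by
      intro j hj
      rcases eq_or_ne j i with rfl | hji
      · exact Function.update_self ..
      · rw [Function.update_of_ne hji]
        exact hxy j (by simp [hji, hj])
    rw [← hf x i (y i)]
    exact ih _ hagree

variable [∀ i, Fintype (S i)]

theorem sum_apply_update_pos {p : (∀ i, S i) → ℝ} (hp : ∀ x, 0 < p x) (x : ∀ i, S i) (i : ι) :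
    0 < ∑ a : S i, p (Function.update x i a) :=
  sum_pos (fun _ _ => hp _) ⟨x i, mem_univ _⟩

theorem sum_apply_update_update {β : Type*} [AddCommMonoid β] (p : (∀ i, S i) → β)
    (x : ∀ i, S i) (i : ι) (a : S i) :
    ∑ b : S i, p (Function.update (Function.update x i a) i b) =
      ∑ b : S i, p (Function.update x i b) := by
  simp only [Function.update_idem]

theorem div_eq_div_sum_apply_update_of_cond_eq {p q : (∀ i, S i) → ℝ}
    (hp : ∀ x, 0 < p x) (hq : ∀ x, 0 < q x) {x : ∀ i, S i} {i : ι}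
    (hcond : p x / ∑ a : S i, p (Function.update x i a) =
      q x / ∑ a : S i, q (Function.update x i a)) :
    p x / q x = (∑ a : S i, p (Function.update x i a)) / ∑ a : S i, q (Function.update x i a) :=
  (div_eq_div_iff_div_eq_div' (sum_apply_update_pos hp x i).ne' (hq x).ne').1 hcond

theorem div_apply_update_eq_of_cond_eq {p q : (∀ i, S i) → ℝ}
    (hp : ∀ x, 0 < p x) (hq : ∀ x, 0 < q x)
    (hcond : ∀ i x, p x / ∑ a : S i, p (Function.update x i a) =
      q x / ∑ a : S i, q (Function.update x i a))
    (x : ∀ i, S i) (i : ι) (a : S i) :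
    p (Function.update x i a) / q (Function.update x i a) = p x / q x := by
  rw [div_eq_div_sum_apply_update_of_cond_eq hp hq (hcond i _),
    div_eq_div_sum_apply_update_of_cond_eq hp hq (hcond i x),
    sum_apply_update_update, sum_apply_update_update]

end UpdateInvariant

theorem eq_of_div_eq_div_of_sum_eq {α K : Type*} [Fintype α] [Field K] {p q : α → K}
    (hq : ∀ x, q x ≠ 0) (hsum : ∑ x, p x = ∑ x, q x) (hsum_ne : ∑ x, q x ≠ 0)
    (hratio : ∀ x y, p x / q x = p y / q y) : p = q := by
  funext x
  have hscale : ∑ y, p y = p x / q x * ∑ y, q y := by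
    rw [mul_sum]
    exact sum_congr rfl fun y _ => by rw [hratio x y, div_mul_cancel₀ _ (hq y)]
  rw [hsum, eq_comm, mul_eq_right₀ hsum_ne, div_eq_one_iff_eq (hq x)] at hscale
  exact hscale

theorem pseudo_likelihood_identifiability_general
    {m : ℕ} (S : Fin m → Type) [∀ i, Fintype (S i)]
    (p q : (∀ i, S i) → ℝ)
    (hp : ∀ x, 0 < p x) (hq : ∀ x, 0 < q x)
    (hp1 : ∑ x, p x = 1) (hq1 : ∑ x, q x = 1)
    (hcond : ∀ (i : Fin m) (x : ∀ j, S j),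
      p x / (∑ a : S i, p (Function.update x i a)) =
      q x / (∑ a : S i, q (Function.update x i a))) :
    p = q :=
  eq_of_div_eq_div_of_sum_eq (fun x => (hq x).ne') (hp1.trans hq1.symm) (hq1 ▸ one_ne_zero)
    (apply_eq_of_forall_apply_update_eq (div_apply_update_eq_of_cond_eq hp hq hcond))

/-- The pseudo-likelihood collection of m-pairs ensures identifiability: if two strictly
positive distributions on a finite product space have the same single-coordinate conditionals
`p(X_i | X_{-i})` for every coordinate `i`, then they are equal. -/
theorem pseudo_likelihood_identifiability
    {m : ℕ} (S : Fin m → Type) [∀ i, Fintype (S i)] [∀ i, DecidableEq (S i)]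
    [∀ i, Nonempty (S i)]
    (p q : (∀ i, S i) → ℝ)
    (hp : ∀ x, 0 < p x) (hq : ∀ x, 0 < q x)
    (hp1 : ∑ x, p x = 1) (hq1 : ∑ x, q x = 1)
    (hcond : ∀ (i : Fin m) (x : ∀ j, S j),
      p x / (∑ a : S i, p (Function.update x i a)) =
      q x / (∑ a : S i, q (Function.update x i a))) :
    p = q :=
  pseudo_likelihood_identifiability_general S p q hp hq hp1 hq1 hcond
end

section
/- In the misspecified setting where the true distribution P lies outside the model family {p_θ : θ ∈ Θ}, suppose θ_0 is a well-separated maximizer of M(θ) = −Σ_{j=1}^k β_j λ_j D(P(X_{A_j}|X_{B_j}) || p_θ(X_{A_j}|X_{B_j})), i.e., sup_{θ: ‖θ−θ_0‖ ≥ ε} M(θ) < M(θ_0) for all ε > 0. Then under the regularity conditions of the consistency theorem, the stochastic composite likelihood maximizer θ̂_n converges to θ_0 with probability 1. -/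
open Finset MeasureTheory ProbabilityTheory Filter Topology

/-- Marginal probability of the event that the coordinates in `A` agree with `x`. -/
noncomputable def margin {m : ℕ} {S : Fin m → Type} [∀ i, Fintype (S i)] [∀ i, DecidableEq (S i)]
    (p : (∀ i, S i) → ℝ) (A : Finset (Fin m)) (x : ∀ i, S i) : ℝ :=
  ∑ y : ∀ i, S i, if ∀ i ∈ A, y i = x i then p y else 0

/-- Conditional probability `p(X_A = x_A | X_B = x_B)`. -/
noncomputable def condProb {m : ℕ} {S : Fin m → Type} [∀ i, Fintype (S i)] [∀ i, DecidableEq (S i)]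
    (p : (∀ i, S i) → ℝ) (A B : Finset (Fin m)) (x : ∀ i, S i) : ℝ :=
  margin p (A ∪ B) x / margin p B x

/-- Conditional KL divergence `D(P(X_A|X_B) || q(X_A|X_B))` under the true distribution `P`. -/
noncomputable def condKL {m : ℕ} {S : Fin m → Type} [∀ i, Fintype (S i)] [∀ i, DecidableEq (S i)]
    (P q : (∀ i, S i) → ℝ) (A B : Finset (Fin m)) : ℝ :=
  ∑ x, P x * Real.log (condProb P A B x / condProb q A B x)

/-- The stochastic composite log-likelihood. -/
noncomputable def scl {m k r : ℕ} {S : Fin m → Type} [∀ i, Fintype (S i)]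
    [∀ i, DecidableEq (S i)] {Ω : Type}
    (p : (Fin r → ℝ) → (∀ i, S i) → ℝ) (A B : Fin k → Finset (Fin m)) (β : Fin k → ℝ)
    (X : ℕ → Ω → (∀ i, S i)) (Z : ℕ → Ω → (Fin k → Bool))
    (n : ℕ) (θ : Fin r → ℝ) (ω : Ω) : ℝ :=
  (1/(n:ℝ)) * ∑ i ∈ Finset.range n, ∑ j,
    β j * (if Z i ω j then (1:ℝ) else 0) * Real.log (condProb (p θ) (A j) (B j) (X i ω))

/-- The population objective
`M(θ) = - ∑_j β_j λ_j D(P(X_{A_j}|X_{B_j}) || p_θ(X_{A_j}|X_{B_j}))`. -/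
noncomputable def Mobj {m k r : ℕ} {S : Fin m → Type} [∀ i, Fintype (S i)]
    [∀ i, DecidableEq (S i)]
    (P : (∀ i, S i) → ℝ) (p : (Fin r → ℝ) → (∀ i, S i) → ℝ)
    (A B : Fin k → Finset (Fin m)) (β lam : Fin k → ℝ) (θ : Fin r → ℝ) : ℝ :=
  -∑ j, β j * lam j * condKL P (p θ) (A j) (B j)


section Helpers

variable {m : ℕ} {S : Fin m → Type} [∀ i, Fintype (S i)] [∀ i, DecidableEq (S i)]

lemma margin_pos {p : (∀ i, S i) → ℝ} (hp : ∀ y, 0 < p y) (Bs : Finset (Fin m))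
    (x : ∀ i, S i) : 0 < margin p Bs x := by
  unfold margin
  refine Finset.sum_pos' (fun y _ => ?_) ⟨x, Finset.mem_univ x, ?_⟩
  · split
    · exact (hp y).le
    · exact le_rfl
  · rw [if_pos (fun i _ => rfl)]; exact hp x

lemma margin_le {p : (∀ i, S i) → ℝ} (hp : ∀ y, 0 < p y) (As Bs : Finset (Fin m))
    (x : ∀ i, S i) : margin p (As ∪ Bs) x ≤ margin p Bs x := by
  unfold margin
  refine Finset.sum_le_sum fun y _ => ?_
  by_cases h : ∀ i ∈ As ∪ Bs, y i = x i
  · rw [if_pos h, if_pos fun i hi => h i (Finset.mem_union_right _ hi)]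
  · rw [if_neg h]
    split
    · exact (hp y).le
    · exact le_rfl

lemma condProb_pos {p : (∀ i, S i) → ℝ} (hp : ∀ y, 0 < p y) (As Bs : Finset (Fin m))
    (x : ∀ i, S i) : 0 < condProb p As Bs x :=
  div_pos (margin_pos hp _ x) (margin_pos hp _ x)

lemma condProb_le_one {p : (∀ i, S i) → ℝ} (hp : ∀ y, 0 < p y) (As Bs : Finset (Fin m))
    (x : ∀ i, S i) : condProb p As Bs x ≤ 1 :=
  (div_le_one (margin_pos hp _ x)).2 (margin_le hp As Bs x)

lemma log_condProb_nonpos {p : (∀ i, S i) → ℝ} (hp : ∀ y, 0 < p y) (As Bs : Finset (Fin m))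
    (x : ∀ i, S i) : Real.log (condProb p As Bs x) ≤ 0 :=
  Real.log_nonpos (condProb_pos hp As Bs x).le (condProb_le_one hp As Bs x)

end Helpers

/-- Empirical weighted frequency. -/
noncomputable def femp {m k : ℕ} {S : Fin m → Type} [∀ i, Fintype (S i)]
    [∀ i, DecidableEq (S i)] {Ω : Type}
    (X : ℕ → Ω → (∀ i, S i)) (Z : ℕ → Ω → (Fin k → Bool))
    (n : ℕ) (j : Fin k) (x : ∀ i, S i) (ω : Ω) : ℝ :=
  (1/(n:ℝ)) * ∑ i ∈ Finset.range n,
    (if Z i ω j then (1:ℝ) else 0) * (if X i ω = x then (1:ℝ) else 0)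

lemma scl_eq_femp {m k r : ℕ} {S : Fin m → Type} [∀ i, Fintype (S i)]
    [∀ i, DecidableEq (S i)] {Ω : Type}
    (p : (Fin r → ℝ) → (∀ i, S i) → ℝ) (A B : Fin k → Finset (Fin m)) (β : Fin k → ℝ)
    (X : ℕ → Ω → (∀ i, S i)) (Z : ℕ → Ω → (Fin k → Bool))
    (n : ℕ) (θ : Fin r → ℝ) (ω : Ω) :
    scl p A B β X Z n θ ω
      = ∑ j, ∑ x, β j * femp X Z n j x ω * Real.log (condProb (p θ) (A j) (B j) x) := by
  have hx : ∀ (g : (∀ i, S i) → ℝ) (x0 : ∀ i, S i),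
      ∑ x, (if x0 = x then (1:ℝ) else 0) * g x = g x0 := by
    intro g x0
    simp [ite_mul, Finset.sum_ite_eq]
  symm
  calc ∑ j, ∑ x, β j * femp X Z n j x ω * Real.log (condProb (p θ) (A j) (B j) x)
      = ∑ j, ∑ x, ∑ i ∈ Finset.range n, (1/(n:ℝ)) *
          (β j * ((if Z i ω j then (1:ℝ) else 0) * (if X i ω = x then (1:ℝ) else 0)) *
            Real.log (condProb (p θ) (A j) (B j) x)) := by
        refine Finset.sum_congr rfl fun j _ => Finset.sum_congr rfl fun x _ => ?_
        rw [femp, Finset.mul_sum, Finset.mul_sum, Finset.sum_mul]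
        exact Finset.sum_congr rfl fun i _ => by ring
    _ = ∑ i ∈ Finset.range n, ∑ j, ∑ x, (1/(n:ℝ)) *
          (β j * ((if Z i ω j then (1:ℝ) else 0) * (if X i ω = x then (1:ℝ) else 0)) *
            Real.log (condProb (p θ) (A j) (B j) x)) := by
        rw [Finset.sum_congr rfl fun (j : Fin k) _ => Finset.sum_comm, Finset.sum_comm]
    _ = ∑ i ∈ Finset.range n, (1/(n:ℝ)) * ∑ j,
          β j * (if Z i ω j then (1:ℝ) else 0) *
            Real.log (condProb (p θ) (A j) (B j) (X i ω)) := by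
        refine Finset.sum_congr rfl fun i _ => ?_
        rw [Finset.mul_sum]
        refine Finset.sum_congr rfl fun j _ => ?_
        calc ∑ x, (1/(n:ℝ)) *
              (β j * ((if Z i ω j then (1:ℝ) else 0) * (if X i ω = x then (1:ℝ) else 0)) *
                Real.log (condProb (p θ) (A j) (B j) x))
            = ∑ x, (if X i ω = x then (1:ℝ) else 0) *
                ((1/(n:ℝ)) * (β j * (if Z i ω j then (1:ℝ) else 0) *
                  Real.log (condProb (p θ) (A j) (B j) x))) :=
              Finset.sum_congr rfl fun x _ => by ring
          _ = (1/(n:ℝ)) * (β j * (if Z i ω j then (1:ℝ) else 0) *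
                Real.log (condProb (p θ) (A j) (B j) (X i ω))) := hx _ _
          _ = _ := by ring
    _ = scl p A B β X Z n θ ω := by rw [scl, Finset.mul_sum]

/-- Consistency of the maximum stochastic composite likelihood estimator under
misspecification: if the true distribution `P` lies outside the model family and `θ₀` is a
well-separated maximizer of `M(θ)`, the maximizer of the scl converges to `θ₀` a.s. -/
theorem mscle_consistency_misspecified
    {m k r : ℕ} (S : Fin m → Type) [∀ i, Fintype (S i)] [∀ i, DecidableEq (S i)]
    [∀ i, Nonempty (S i)]
    [∀ i, MeasurableSpace (S i)] [∀ i, DiscreteMeasurableSpace (S i)]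
    (Θ : Set (Fin r → ℝ)) (hΘ : IsOpen Θ)
    (p : (Fin r → ℝ) → (∀ i, S i) → ℝ)
    (hpos : ∀ θ ∈ Θ, ∀ x, 0 < p θ x)
    (hsum : ∀ θ ∈ Θ, ∑ x, p θ x = 1)
    (hsmooth : ∀ x, ContDiffOn ℝ (⊤ : ℕ∞) (fun θ => p θ x) Θ)
    (A B : Fin k → Finset (Fin m))
    (hpair : ∀ j, (A j).Nonempty ∧ Disjoint (A j) (B j))
    (β lam : Fin k → ℝ) (hβ : ∀ j, 0 < β j) (hlam : ∀ j, 0 < lam j ∧ lam j ≤ 1)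
    -- the true distribution P, strictly positive, outside the model family
    (P : (∀ i, S i) → ℝ) (hPpos : ∀ x, 0 < P x) (hPsum : ∑ x, P x = 1)
    (hout : ∀ θ ∈ Θ, p θ ≠ P)
    -- θ₀ is a well-separated maximizer of M
    (θ0 : Fin r → ℝ) (hθ0 : θ0 ∈ Θ)
    (hmaxM : ∀ θ ∈ Θ, Mobj P p A B β lam θ ≤ Mobj P p A B β lam θ0)
    (hsep : ∀ ε > 0, ∃ c < Mobj P p A B β lam θ0, ∀ θ ∈ Θ,
      ε ≤ ‖θ - θ0‖ → Mobj P p A B β lam θ ≤ c)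
    {Ω : Type} [MeasurableSpace Ω] (Pr : Measure Ω) [IsProbabilityMeasure Pr]
    (X : ℕ → Ω → (∀ i, S i)) (Z : ℕ → Ω → (Fin k → Bool))
    (hmeas : ∀ n, Measurable (fun ω => (X n ω, Z n ω)))
    (hindep : iIndepFun (fun n ω => (X n ω, Z n ω)) Pr)
    (hid : ∀ n, IdentDistrib (fun ω => (X n ω, Z n ω)) (fun ω => (X 0 ω, Z 0 ω)) Pr Pr)
    -- X^{(i)} ∼ P
    (hX : ∀ n x, (Pr {ω | X n ω = x}).toReal = P x)
    (hXZ : ∀ n, IndepFun (X n) (Z n) Pr)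
    (hZ : ∀ n j, (Pr {ω | Z n ω j = true}).toReal = lam j)
    (θhat : ℕ → Ω → (Fin r → ℝ))
    (hmax : ∀ n ω, θhat n ω ∈ Θ ∧
      ∀ θ ∈ Θ, scl p A B β X Z n θ ω ≤ scl p A B β X Z n (θhat n ω) ω) :
    ∀ᵐ ω ∂Pr, Tendsto (fun n => θhat n ω) atTop (𝓝 θ0) := by
  classical
  -- Strong law of large numbers for the empirical weighted frequencies
  have hSLLN : ∀ᵐ ω ∂Pr, ∀ (j : Fin k) (x : ∀ i, S i),
      Tendsto (fun n => femp X Z n j x ω) atTop (𝓝 (lam j * P x)) := by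
    rw [ae_all_iff]
    intro j
    rw [ae_all_iff]
    intro x
    set φ : ((∀ i, S i) × (Fin k → Bool)) → ℝ :=
      fun q => (if q.2 j then (1:ℝ) else 0) * (if q.1 = x then (1:ℝ) else 0) with hφdef
    have hφ : Measurable φ := measurable_of_countable φ
    set W : ℕ → Ω → ℝ := fun i ω =>
      (if Z i ω j then (1:ℝ) else 0) * (if X i ω = x then (1:ℝ) else 0) with hWdef
    have hWeq : ∀ i, W i = φ ∘ (fun ω => (X i ω, Z i ω)) := fun i => rfl
    have hWmeas : ∀ i, Measurable (W i) := fun i => by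
      rw [hWeq i]; exact hφ.comp (hmeas i)
    have hint : Integrable (W 0) Pr := by
      refine (integrable_const (1:ℝ)).mono' (hWmeas 0).aestronglyMeasurable
        (ae_of_all _ fun ω => ?_)
      simp only [hWdef, Real.norm_eq_abs, norm_one]
      split <;> split <;> norm_num
    have hWindep : Pairwise (Function.onFun (IndepFun · · Pr) W) := by
      intro i i' hii'
      rw [Function.onFun, hWeq i, hWeq i']
      exact (hindep.indepFun hii').comp hφ hφ
    have hWident : ∀ i, IdentDistrib (W i) (W 0) Pr Pr := fun i => by
      rw [hWeq i, hWeq 0]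
      exact (hid i).comp hφ
    have h := strong_law_ae_real W hint hWindep hWident
    have hXm : Measurable (X 0) := by
      have := measurable_fst.comp (hmeas 0); exact this
    have hZm : Measurable (Z 0) := by
      have := measurable_snd.comp (hmeas 0); exact this
    have hmx : MeasurableSet ({x} : Set (∀ i, S i)) := measurableSet_singleton x
    have hmz : MeasurableSet {g : Fin k → Bool | g j = true} := by
      have : {g : Fin k → Bool | g j = true} = (fun g : Fin k → Bool => g j) ⁻¹' {true} := rfl
      rw [this]
      exact measurable_pi_apply j (measurableSet_singleton true)
    have hEW : Pr[W 0] = lam j * P x := by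
      have hWind : W 0 = Set.indicator ((X 0) ⁻¹' {x} ∩ (Z 0) ⁻¹' {g | g j = true})
          (fun _ => (1:ℝ)) := by
        funext ω
        by_cases h1 : X 0 ω = x <;> by_cases h2 : Z 0 ω j <;>
          simp [hWdef, Set.indicator_apply, Set.mem_inter_iff, Set.mem_preimage,
            Set.mem_singleton_iff, Set.mem_setOf_eq, h1, h2]
      have hmeasE : MeasurableSet ((X 0) ⁻¹' {x} ∩ (Z 0) ⁻¹' {g | g j = true}) :=
        (hXm hmx).inter (hZm hmz)
      have hprod := (hXZ 0).measure_inter_preimage_eq_mul {x} {g | g j = true} hmx hmz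
      have e1 : (Pr ((X 0) ⁻¹' {x})).toReal = P x := hX 0 x
      have e2 : (Pr ((Z 0) ⁻¹' {g | g j = true})).toReal = lam j := hZ 0 j
      calc Pr[W 0] = ∫ ω, Set.indicator ((X 0) ⁻¹' {x} ∩ (Z 0) ⁻¹' {g | g j = true})
            (fun _ => (1:ℝ)) ω ∂Pr := by rw [hWind]
        _ = (Pr ((X 0) ⁻¹' {x} ∩ (Z 0) ⁻¹' {g | g j = true})).toReal • (1:ℝ) :=
            integral_indicator_const _ hmeasE
        _ = lam j * P x := by
            rw [smul_eq_mul, mul_one, hprod, ENNReal.toReal_mul, e1, e2, mul_comm]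
    rw [hEW] at h
    filter_upwards [h] with ω hω
    have : (fun n : ℕ => femp X Z n j x ω) = fun n : ℕ => (∑ i ∈ range n, W i ω) / n := by
      funext n
      rw [femp, one_div_mul_eq_div]
    rw [this]
    exact hω
  -- positivity facts
  have hcpP : ∀ (j : Fin k) (x : ∀ i, S i), 0 < condProb P (A j) (B j) x :=
    fun j x => condProb_pos hPpos _ _ x
  have hcpθ : ∀ θ ∈ Θ, ∀ (j : Fin k) (x : ∀ i, S i), 0 < condProb (p θ) (A j) (B j) x :=
    fun θ hθ j x => condProb_pos (hpos θ hθ) _ _ x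
  have hLnp : ∀ θ ∈ Θ, ∀ (j : Fin k) (x : ∀ i, S i),
      Real.log (condProb (p θ) (A j) (B j) x) ≤ 0 :=
    fun θ hθ j x => log_condProb_nonpos (hpos θ hθ) _ _ x
  -- the population objective in terms of the linearized functional
  set C : ℝ := ∑ j, ∑ x, β j * (lam j * P x) * Real.log (condProb P (A j) (B j) x) with hCdef
  set L : (Fin r → ℝ) → ℝ := fun θ =>
    ∑ j, ∑ x, β j * (lam j * P x) * Real.log (condProb (p θ) (A j) (B j) x) with hLdef
  have hM : ∀ θ ∈ Θ, L θ = Mobj P p A B β lam θ + C := by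
    intro θ hθ
    have hKL : ∀ j : Fin k, β j * lam j * condKL P (p θ) (A j) (B j)
        = (∑ x, β j * (lam j * P x) * Real.log (condProb P (A j) (B j) x))
          - ∑ x, β j * (lam j * P x) * Real.log (condProb (p θ) (A j) (B j) x) := by
      intro j
      have : condKL P (p θ) (A j) (B j)
          = ∑ x, (P x * Real.log (condProb P (A j) (B j) x)
              - P x * Real.log (condProb (p θ) (A j) (B j) x)) := by
        rw [condKL]
        refine Finset.sum_congr rfl fun x _ => ?_
        rw [Real.log_div (hcpP j x).ne' (hcpθ θ hθ j x).ne', mul_sub]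
      rw [this, Finset.mul_sum, ← Finset.sum_sub_distrib]
      exact Finset.sum_congr rfl fun x _ => by ring
    rw [Mobj, hLdef, hCdef]
    simp only [hKL]
    rw [Finset.sum_sub_distrib]
    ring
  -- main argument
  filter_upwards [hSLLN] with ω hω
  rw [Metric.tendsto_atTop]
  intro ε hε
  obtain ⟨c, hc, hcθ⟩ := hsep ε hε
  set M0 : ℝ := Mobj P p A B β lam θ0 with hM0def
  set δ : ℝ := min (1/2) ((M0 - c) / (2 * (|M0 + c + 2*C| + 1))) with hδdef
  have hδpos : 0 < δ :=
    lt_min (by norm_num) (div_pos (by linarith) (by positivity))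
  have hδhalf : δ ≤ 1/2 := min_le_left _ _
  have hkey : (1 - δ) * (c + C) < (1 + δ) * (M0 + C) := by
    have h1 : δ ≤ (M0 - c) / (2 * (|M0 + c + 2*C| + 1)) := min_le_right _ _
    have h2 : δ * |M0 + c + 2*C| ≤ (M0 - c) / 2 := by
      have h3 := mul_le_mul_of_nonneg_right h1 (abs_nonneg (M0 + c + 2*C))
      have h4 : (M0 - c) / (2 * (|M0 + c + 2*C| + 1)) * |M0 + c + 2*C| ≤ (M0 - c) / 2 := by
        rw [div_mul_eq_mul_div, div_le_div_iff₀ (by positivity) (by norm_num)]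
        nlinarith [abs_nonneg (M0 + c + 2*C)]
      linarith
    have h5 := mul_le_mul_of_nonneg_left (neg_abs_le (M0 + c + 2*C)) hδpos.le
    nlinarith
  -- eventual sandwich for the empirical frequencies
  have hev : ∀ᶠ n in atTop, ∀ (j : Fin k) (x : ∀ i, S i),
      (1 - δ) * (lam j * P x) ≤ femp X Z n j x ω ∧
        femp X Z n j x ω ≤ (1 + δ) * (lam j * P x) := by
    rw [Filter.eventually_all]
    intro j
    rw [Filter.eventually_all]
    intro x
    have hlp : 0 < lam j * P x := mul_pos (hlam j).1 (hPpos x)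
    obtain ⟨N, hN⟩ := Metric.tendsto_atTop.1 (hω j x) (δ * (lam j * P x))
      (mul_pos hδpos hlp)
    rw [eventually_atTop]
    refine ⟨N, fun n hn => ?_⟩
    have := hN n hn
    rw [Real.dist_eq] at this
    obtain ⟨ha, hb⟩ := abs_lt.1 this
    constructor <;> nlinarith
  have hεdist : ∀ᶠ n in atTop, dist (θhat n ω) θ0 < ε := by
    filter_upwards [hev] with n hn
    by_contra hcon
    push_neg at hcon
    have hθhΘ := (hmax n ω).1
    have hMθh : Mobj P p A B β lam (θhat n ω) ≤ c :=
      hcθ _ hθhΘ (by rwa [dist_eq_norm] at hcon)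
    -- upper bound at θhat
    have hub : scl p A B β X Z n (θhat n ω) ω ≤ (1 - δ) * L (θhat n ω) := by
      rw [scl_eq_femp, hLdef, Finset.mul_sum]
      refine Finset.sum_le_sum fun j _ => ?_
      rw [Finset.mul_sum]
      refine Finset.sum_le_sum fun x _ => ?_
      have h1 := (hn j x).1
      have h2 := hLnp _ hθhΘ j x
      have h3 :=
        mul_le_mul_of_nonpos_right (mul_le_mul_of_nonneg_left h1 (hβ j).le) h2
      calc β j * femp X Z n j x ω * Real.log (condProb (p (θhat n ω)) (A j) (B j) x)
          ≤ β j * ((1 - δ) * (lam j * P x)) *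
            Real.log (condProb (p (θhat n ω)) (A j) (B j) x) := h3
        _ = (1 - δ) * (β j * (lam j * P x) *
            Real.log (condProb (p (θhat n ω)) (A j) (B j) x)) := by ring
    -- lower bound at θ0
    have hlb : (1 + δ) * L θ0 ≤ scl p A B β X Z n θ0 ω := by
      rw [scl_eq_femp, hLdef, Finset.mul_sum]
      refine Finset.sum_le_sum fun j _ => ?_
      rw [Finset.mul_sum]
      refine Finset.sum_le_sum fun x _ => ?_
      have h1 := (hn j x).2
      have h2 := hLnp _ hθ0 j x
      have h3 :=
        mul_le_mul_of_nonpos_right (mul_le_mul_of_nonneg_left h1 (hβ j).le) h2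
      calc (1 + δ) * (β j * (lam j * P x) * Real.log (condProb (p θ0) (A j) (B j) x))
          = β j * ((1 + δ) * (lam j * P x)) *
            Real.log (condProb (p θ0) (A j) (B j) x) := by ring
        _ ≤ β j * femp X Z n j x ω * Real.log (condProb (p θ0) (A j) (B j) x) := h3
    have hm := (hmax n ω).2 θ0 hθ0
    have hLθh : L (θhat n ω) = Mobj P p A B β lam (θhat n ω) + C := hM _ hθhΘ
    have hLθ0 : L θ0 = M0 + C := hM _ hθ0
    have h1d : (0:ℝ) ≤ 1 - δ := by linarith
    have hfin : (1 - δ) * L (θhat n ω) ≤ (1 - δ) * (c + C) :=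
      mul_le_mul_of_nonneg_left (by rw [hLθh]; linarith) h1d
    rw [hLθ0] at hlb
    linarith
  exact eventually_atTop.1 hεdist
end
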